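/- Let n ≥ 3 be an integer, define H(t) = ∫₀^∞ (t+σ)^{−3/2}(1+σ)^{−(n−1)/2} dσ for t > 0, and define A(t) = (n−1)√t·H(t) + n t^{3/2} H′(t) + 1 and B(t) = −(n(n−2)/2)√t·H(t) + (n−2). Then: (i) for every α ∈ (0, n−2] there exists t ∈ (0,1) such that A(t)α + B(t) = 0; (ii) for every α ∈ (−1, 0) there exists t > 1 such that A(t)α + B(t) = 0; (iii) for every α ∈ (−1, n−2] and every t > 0 with A(t)α + B(t) = 0, one has (n−2+α)/√t − α H(t) > 0. -/

import Mathlib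

open MeasureTheory Set Filter Topology
open scoped ENNReal NNReal Real BigOperators RealInnerProductSpace

noncomputable section

attribute [local instance] Classical.propDecidable

/-- `ℝⁿ` as a Euclidean space. -/
abbrev Euc (n : ℕ) := EuclideanSpace ℝ (Fin n)

/-- The anisotropic interaction kernel `W_α`, with values in `[0,+∞]`:
`W_α(x) = 1/|x|^(n-2) + α x₁²/|x|ⁿ` for `x ≠ 0`, and `W_α(0) = +∞`. -/
def kerW (n : ℕ) [NeZero n] (α : ℝ) (x : Euc n) : ℝ≥0∞ :=
  if x = 0 then ⊤
  else ENNReal.ofReal (1 / ‖x‖ ^ (n - 2) + α * (x 0) ^ 2 / ‖x‖ ^ n)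

/-- The nonlocal energy `I_α(μ) = ∬ W_α(x-y) dμ(x)dμ(y) + ∫ |x|² dμ(x)`. -/
def energyI (n : ℕ) [NeZero n] (α : ℝ) (μ : Measure (Euc n)) : ℝ≥0∞ :=
  (∫⁻ p : Euc n × Euc n, kerW n α (p.1 - p.2) ∂(μ.prod μ)) +
    ∫⁻ x, ENNReal.ofReal (‖x‖ ^ 2) ∂μ


/-- The elliptic-type integral `H(t) = ∫₀^∞ (t+σ)^{-3/2}(1+σ)^{-(n-1)/2} dσ`. -/
def Hfun (n : ℕ) (t : ℝ) : ℝ :=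
  ∫ σ in Ioi (0 : ℝ), (t + σ) ^ (-(3 / 2) : ℝ) * (1 + σ) ^ (-(((n : ℝ) - 1) / 2))

/-- `A(t) = (n-1)√t H(t) + n t^{3/2} H'(t) + 1`. -/
def Afun (n : ℕ) (t : ℝ) : ℝ :=
  ((n : ℝ) - 1) * Real.sqrt t * Hfun n t + (n : ℝ) * t ^ ((3 : ℝ) / 2) * deriv (Hfun n) t + 1

/-- `B(t) = -(n(n-2)/2)√t H(t) + (n-2)`. -/
def Bfun (n : ℕ) (t : ℝ) : ℝ :=
  -((n : ℝ) * ((n : ℝ) - 2) / 2) * Real.sqrt t * Hfun n t + ((n : ℝ) - 2)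

section S14infra
namespace S14

lemma int_shift (t q : ℝ) (ht : 0 < t) (hq : 1 < q) :
    (∫ σ in Ioi (0:ℝ), (t+σ)^(-q)) = t^(1-q)/(q-1) := by
  have h1 : MeasurePreserving (fun x : ℝ => t + x) volume volume :=
    measurePreserving_add_left volume t
  have h2 : MeasurableEmbedding (fun x : ℝ => t + x) :=
    (MeasurableEquiv.addLeft t).measurableEmbedding
  have h3 : (fun x : ℝ => t + x) ⁻¹' (Ioi t) = Ioi 0 := by ext x; simp
  have h := h1.setIntegral_preimage_emb h2 (fun x => x ^ (-q)) (Ioi t)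
  rw [h3] at h
  rw [h, integral_Ioi_rpow_of_lt (by linarith) ht, show -q + 1 = 1 - q by ring]
  rw [show q - 1 = -(1-q) by ring, div_neg, neg_div]

lemma intOn_shift (t q : ℝ) (ht : 0 < t) (hq : 1 < q) :
    IntegrableOn (fun σ : ℝ => (t+σ)^(-q)) (Ioi (0:ℝ)) := by
  have h1 : MeasurePreserving (fun x : ℝ => t + x)
      (volume.restrict ((fun x : ℝ => t + x) ⁻¹' (Ioi t))) (volume.restrict (Ioi t)) :=
    (measurePreserving_add_left volume t).restrict_preimage_emb
      (MeasurableEquiv.addLeft t).measurableEmbedding (Ioi t)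
  have h3 : (fun x : ℝ => t + x) ⁻¹' (Ioi t) = Ioi 0 := by ext x; simp
  rw [h3] at h1
  exact (h1.integrable_comp_emb (MeasurableEquiv.addLeft t).measurableEmbedding
    (g := fun x => x ^ (-q))).mpr (integrableOn_Ioi_rpow_of_lt (by linarith) ht)

/-- The kernel integral. -/
def Kf (m q t : ℝ) : ℝ := ∫ σ in Ioi (0:ℝ), (t+σ)^(-q) * (1+σ)^(-m)

lemma contOn_ker (m q t : ℝ) (ht : 0 < t) :
    ContinuousOn (fun σ : ℝ => (t+σ)^(-q) * (1+σ)^(-m)) (Ioi 0) := by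
  apply ContinuousOn.mul
  · apply ContinuousOn.rpow_const (by fun_prop)
    intro x hx; exact Or.inl (by have : (0:ℝ) < x := hx; positivity)
  · apply ContinuousOn.rpow_const (by fun_prop)
    intro x hx; exact Or.inl (by have : (0:ℝ) < x := hx; positivity)

lemma intOn_ker (m q t : ℝ) (ht : 0 < t) (hq : 1 < q) (hm : 0 ≤ m) :
    IntegrableOn (fun σ : ℝ => (t+σ)^(-q) * (1+σ)^(-m)) (Ioi (0:ℝ)) := by
  apply Integrable.mono (intOn_shift t q ht hq)
    ((contOn_ker m q t ht).aestronglyMeasurable measurableSet_Ioi)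
  filter_upwards [ae_restrict_mem measurableSet_Ioi] with σ hσ
  have hσ0 : (0:ℝ) < σ := hσ
  have h1 : (0:ℝ) < t + σ := by positivity
  have h2 : (1+σ)^(-m) ≤ 1 := by
    apply Real.rpow_le_one_of_one_le_of_nonpos (by linarith) (by linarith)
  have h3 : (0:ℝ) ≤ (t+σ)^(-q) := (Real.rpow_pos_of_pos h1 _).le
  have h4 : (0:ℝ) ≤ (1+σ)^(-m) := Real.rpow_nonneg (by linarith) _
  rw [Real.norm_of_nonneg (by positivity), Real.norm_of_nonneg h3]
  nlinarith

lemma K_nonneg (m q t : ℝ) (ht : 0 < t) : 0 ≤ Kf m q t := by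
  apply setIntegral_nonneg measurableSet_Ioi
  intro σ hσ
  have hσ0 : (0:ℝ) < σ := hσ
  have h4 : (0:ℝ) ≤ (1+σ)^(-m) := Real.rpow_nonneg (by linarith) _
  have h3 : (0:ℝ) ≤ (t+σ)^(-q) := Real.rpow_nonneg (by linarith) _
  positivity

lemma K_le (m q t : ℝ) (ht : 0 < t) (hq : 1 < q) (hm : 0 ≤ m) :
    Kf m q t ≤ t^(1-q)/(q-1) := by
  rw [← int_shift t q ht hq]
  apply setIntegral_mono_on (intOn_ker m q t ht hq hm) (intOn_shift t q ht hq) measurableSet_Ioi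
  intro σ hσ
  have hσ0 : (0:ℝ) < σ := hσ
  have h2 : (1+σ)^(-m) ≤ 1 :=
    Real.rpow_le_one_of_one_le_of_nonpos (by linarith) (by linarith)
  have h3 : (0:ℝ) ≤ (t+σ)^(-q) := Real.rpow_nonneg (by linarith) _
  nlinarith


/-- `K q t ≥ s^{-q}/(q+m-1)` where `s = max t 1`. -/
lemma K_pos_lb (m q t : ℝ) (ht : 0 < t) (hq : 1 < q) (hm : 0 ≤ m) :
    (max t 1)^(-q) * (1/(q+m-1)) ≤ Kf m q t := by
  set s := max t 1 with hs
  have hs1 : 1 ≤ s := le_max_right _ _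
  have hts : t ≤ s := le_max_left _ _
  have hs0 : 0 < s := by linarith
  have key : ∀ σ ∈ Ioi (0:ℝ), s^(-q) * ((1+σ)^(-(q+m))) ≤ (t+σ)^(-q) * (1+σ)^(-m) := by
    intro σ hσ
    have hσ0 : (0:ℝ) < σ := hσ
    have h1 : t + σ ≤ s * (1+σ) := by nlinarith
    have h2 : (s*(1+σ))^(-q) ≤ (t+σ)^(-q) :=
      Real.rpow_le_rpow_of_nonpos (by linarith) h1 (by linarith)
    have h3 : (s*(1+σ))^(-q) = s^(-q) * (1+σ)^(-q) :=
      Real.mul_rpow hs0.le (by linarith)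
    have h4 : (1+σ)^(-(q+m)) = (1+σ)^(-q) * (1+σ)^(-m) := by
      rw [← Real.rpow_add (by linarith)]; ring_nf
    have h5 : (0:ℝ) ≤ (1+σ)^(-m) := Real.rpow_nonneg (by linarith) _
    have h6 : (0:ℝ) ≤ (1+σ)^(-q) := Real.rpow_nonneg (by linarith) _
    have h7 : (0:ℝ) ≤ s^(-q) := Real.rpow_nonneg hs0.le _
    rw [h4]
    calc s^(-q) * ((1+σ)^(-q) * (1+σ)^(-m)) = ((s*(1+σ))^(-q)) * (1+σ)^(-m) := by
          rw [h3]; ring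
      _ ≤ (t+σ)^(-q) * (1+σ)^(-m) := mul_le_mul_of_nonneg_right h2 h5
  have hint1 : IntegrableOn (fun σ : ℝ => s^(-q) * ((1+σ)^(-(q+m)))) (Ioi (0:ℝ)) :=
    (intOn_shift 1 (q+m) one_pos (by linarith)).const_mul _
  have := setIntegral_mono_on hint1 (intOn_ker m q t ht hq hm) measurableSet_Ioi key
  calc s^(-q) * (1/(q+m-1)) = ∫ σ in Ioi (0:ℝ), s^(-q) * ((1+σ)^(-(q+m))) := by
        rw [MeasureTheory.integral_const_mul, int_shift 1 (q+m) one_pos (by linarith)]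
        rw [Real.one_rpow]
    _ ≤ Kf m q t := this


lemma bern (m σ : ℝ) (hm : 1 ≤ m) (hσ : 0 < σ) : 1 - (1+σ)^(-m) ≤ m*σ := by
  have h0 : (0:ℝ) < 1 + σ := by linarith
  set z : ℝ := (1+σ)⁻¹ - 1 with hz
  have hz1 : -1 ≤ z := by
    have : (0:ℝ) < (1+σ)⁻¹ := by positivity
    simp only [hz]; linarith
  have h1 : 1 + m*z ≤ (1+z)^m := one_add_mul_self_le_rpow_one_add hz1 hm
  have h2 : (1+z : ℝ) = (1+σ)⁻¹ := by simp [hz]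
  have h3 : (1+z)^m = (1+σ)^(-m) := by
    rw [h2, Real.inv_rpow h0.le, ← Real.rpow_neg h0.le]
  have h4 : -σ ≤ z := by
    have h5 : (1-σ)*(1+σ) ≤ 1 := by nlinarith
    have h6 : 1 - σ ≤ (1+σ)⁻¹ := by
      rw [← sub_nonneg]
      have : (1+σ)⁻¹ - (1-σ) = σ^2/(1+σ) := by field_simp; ring
      rw [this]; positivity
    simp only [hz]; linarith
  nlinarith [h1, mul_le_mul_of_nonneg_left h4 (by linarith : (0:ℝ) ≤ m)]

lemma gap_eq (m q t : ℝ) (ht : 0 < t) (hq : 1 < q) (hm : 0 ≤ m) :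
    t^(1-q)/(q-1) - Kf m q t
      = ∫ σ in Ioi (0:ℝ), (t+σ)^(-q) * (1 - (1+σ)^(-m)) := by
  rw [← int_shift t q ht hq, Kf, ← integral_sub (intOn_shift t q ht hq) (intOn_ker m q t ht hq hm)]
  congr 1; funext σ; ring


lemma ptwise52 (t σ : ℝ) (ht : 0 < t) (hσ : 0 < σ) :
    σ*(t+σ)^(-(5/2:ℝ)) = (t+σ)^(-(3/2:ℝ)) - t*(t+σ)^(-(5/2:ℝ)) := by
  have hp : (0:ℝ) < t + σ := by linarith
  have h1 : (t+σ)^(-(3/2:ℝ)) = (t+σ) * (t+σ)^(-(5/2:ℝ)) := by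
    have := Real.rpow_add hp 1 (-(5/2:ℝ))
    norm_num at this
    rw [show (-(3/2:ℝ)) = (1:ℝ) + -(5/2:ℝ) by norm_num, Real.rpow_add hp, Real.rpow_one]
  rw [h1]; ring

lemma intOn_sigma52 (t : ℝ) (ht : 0 < t) :
    IntegrableOn (fun σ : ℝ => σ*(t+σ)^(-(5/2:ℝ))) (Ioi (0:ℝ)) := by
  apply IntegrableOn.congr_fun
    (((intOn_shift t (3/2) ht (by norm_num)).sub
      ((intOn_shift t (5/2) ht (by norm_num)).const_mul t)))
    _ measurableSet_Ioi
  intro σ hσ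
  exact (ptwise52 t σ ht hσ).symm

lemma int_sigma52 (t : ℝ) (ht : 0 < t) :
    ∫ σ in Ioi (0:ℝ), σ*(t+σ)^(-(5/2:ℝ)) = (4/3)*t^(-(1/2:ℝ)) := by
  rw [setIntegral_congr_fun measurableSet_Ioi (fun σ hσ => ptwise52 t σ ht hσ)]
  rw [integral_sub (intOn_shift t (3/2) ht (by norm_num))
    ((intOn_shift t (5/2) ht (by norm_num)).const_mul t)]
  rw [MeasureTheory.integral_const_mul, int_shift t (3/2) ht (by norm_num),
    int_shift t (5/2) ht (by norm_num)]
  have h2 : t * t^(-(3/2:ℝ)) = t^(-(1/2:ℝ)) := by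
    rw [show (-(1/2:ℝ)) = (1:ℝ) + -(3/2:ℝ) by norm_num, Real.rpow_add ht, Real.rpow_one]
  rw [show (1:ℝ)-3/2 = -(1/2:ℝ) by norm_num, show (1:ℝ)-5/2 = -(3/2:ℝ) by norm_num]
  rw [show (3/2:ℝ)-1 = 1/2 by norm_num, show (5/2:ℝ)-1 = 3/2 by norm_num]
  field_simp
  nlinarith [h2, Real.rpow_nonneg ht.le (-(1/2:ℝ))]

lemma gap52_ub (m t : ℝ) (ht : 0 < t) (hm : 1 ≤ m) :
    (2/3)*t^(-(3/2:ℝ)) - Kf m (5/2) t ≤ (4*m/3)*t^(-(1/2:ℝ)) := by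
  have h := gap_eq m (5/2) t ht (by norm_num) (by linarith)
  rw [show (1:ℝ)-5/2 = -(3/2:ℝ) by norm_num, show (5/2:ℝ)-1 = 3/2 by norm_num] at h
  have h2 : t^(-(3/2:ℝ))/(3/2) = (2/3)*t^(-(3/2:ℝ)) := by ring
  rw [h2] at h
  rw [h]
  have hb : ∀ σ ∈ Ioi (0:ℝ), (t+σ)^(-(5/2:ℝ)) * (1 - (1+σ)^(-m)) ≤ m * (σ*(t+σ)^(-(5/2:ℝ))) := by
    intro σ hσ
    have hσ0 : (0:ℝ) < σ := hσ
    have h3 : (0:ℝ) ≤ (t+σ)^(-(5/2:ℝ)) := Real.rpow_nonneg (by linarith) _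
    have h4 := bern m σ hm hσ0
    nlinarith
  calc (∫ σ in Ioi (0:ℝ), (t+σ)^(-(5/2:ℝ)) * (1 - (1+σ)^(-m)))
      ≤ ∫ σ in Ioi (0:ℝ), m * (σ*(t+σ)^(-(5/2:ℝ))) := by
        apply setIntegral_mono_on _ ((intOn_sigma52 t ht).const_mul m) measurableSet_Ioi hb
        · apply IntegrableOn.congr_fun
            (((intOn_shift t (5/2) ht (by norm_num)).sub
              (intOn_ker m (5/2) t ht (by norm_num) (by linarith)))) _ measurableSet_Ioi
          intro σ hσ; simp only [Pi.sub_apply]; ring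
    _ = (4*m/3)*t^(-(1/2:ℝ)) := by
        rw [MeasureTheory.integral_const_mul, int_sigma52 t ht]; ring


lemma gap32_lb (m t : ℝ) (ht : 0 < t) (hm : 1 ≤ m) :
    (4/3) * (max t 1)^(-(3/2:ℝ)) ≤ 2*t^(-(1/2:ℝ)) - Kf m (3/2) t := by
  have h := gap_eq m (3/2) t ht (by norm_num) (by linarith)
  rw [show (1:ℝ)-3/2 = -(1/2:ℝ) by norm_num, show (3/2:ℝ)-1 = 1/2 by norm_num] at h
  have h2 : t^(-(1/2:ℝ))/(1/2) = 2*t^(-(1/2:ℝ)) := by ring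
  rw [h2] at h
  rw [h]
  set s := max t 1 with hs
  have hs1 : (1:ℝ) ≤ s := le_max_right _ _
  have hts : t ≤ s := le_max_left _ _
  have hs0 : (0:ℝ) < s := by linarith
  have hb : ∀ σ ∈ Ioi (0:ℝ),
      s^(-(3/2:ℝ)) * ((1+σ)^(-(3/2:ℝ)) - (1+σ)^(-(5/2:ℝ)))
        ≤ (t+σ)^(-(3/2:ℝ)) * (1 - (1+σ)^(-m)) := by
    intro σ hσ
    have hσ0 : (0:ℝ) < σ := hσ
    have h1σ : (0:ℝ) < 1+σ := by linarith
    -- (t+σ)^{-3/2} ≥ s^{-3/2} (1+σ)^{-3/2}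
    have e1 : t + σ ≤ s * (1+σ) := by nlinarith
    have e2 : (s*(1+σ))^(-(3/2:ℝ)) ≤ (t+σ)^(-(3/2:ℝ)) :=
      Real.rpow_le_rpow_of_nonpos (by linarith) e1 (by norm_num)
    have e3 : (s*(1+σ))^(-(3/2:ℝ)) = s^(-(3/2:ℝ)) * (1+σ)^(-(3/2:ℝ)) :=
      Real.mul_rpow hs0.le h1σ.le
    -- 1 - (1+σ)^{-m} ≥ 1 - (1+σ)^{-1}
    have e4 : (1+σ)^(-m) ≤ (1+σ)^(-(1:ℝ)) :=
      Real.rpow_le_rpow_of_exponent_le (by linarith) (by linarith)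
    -- (1+σ)^{-3/2}(1-(1+σ)^{-1}) = (1+σ)^{-3/2} - (1+σ)^{-5/2}
    have e5 : (1+σ)^(-(3/2:ℝ)) * (1+σ)^(-(1:ℝ)) = (1+σ)^(-(5/2:ℝ)) := by
      rw [← Real.rpow_add h1σ]; norm_num
    have p1 : (0:ℝ) ≤ (1+σ)^(-(3/2:ℝ)) := Real.rpow_nonneg h1σ.le _
    have p2 : (0:ℝ) ≤ s^(-(3/2:ℝ)) := Real.rpow_nonneg hs0.le _
    have p3 : (0:ℝ) ≤ 1 - (1+σ)^(-m) := by
      have : (1+σ)^(-m) ≤ 1 :=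
        Real.rpow_le_one_of_one_le_of_nonpos (by linarith) (by linarith)
      linarith
    calc s^(-(3/2:ℝ)) * ((1+σ)^(-(3/2:ℝ)) - (1+σ)^(-(5/2:ℝ)))
        = (s^(-(3/2:ℝ)) * (1+σ)^(-(3/2:ℝ))) * (1 - (1+σ)^(-(1:ℝ))) := by
          rw [← e5]; ring
      _ ≤ (s^(-(3/2:ℝ)) * (1+σ)^(-(3/2:ℝ))) * (1 - (1+σ)^(-m)) := by
          apply mul_le_mul_of_nonneg_left (by linarith) (by positivity)
      _ ≤ (t+σ)^(-(3/2:ℝ)) * (1 - (1+σ)^(-m)) := by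
          apply mul_le_mul_of_nonneg_right _ p3
          rw [← e3]; exact e2
  have hint1 : IntegrableOn
      (fun σ : ℝ => s^(-(3/2:ℝ)) * ((1+σ)^(-(3/2:ℝ)) - (1+σ)^(-(5/2:ℝ)))) (Ioi (0:ℝ)) :=
    (((intOn_shift 1 (3/2) one_pos (by norm_num)).sub
      (intOn_shift 1 (5/2) one_pos (by norm_num)))).const_mul _
  have hint2 : IntegrableOn
      (fun σ : ℝ => (t+σ)^(-(3/2:ℝ)) * (1 - (1+σ)^(-m))) (Ioi (0:ℝ)) := by
    apply IntegrableOn.congr_fun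
      ((intOn_shift t (3/2) ht (by norm_num)).sub
        (intOn_ker m (3/2) t ht (by norm_num) (by linarith))) _ measurableSet_Ioi
    intro σ hσ; simp only [Pi.sub_apply]; ring
  have hmono := setIntegral_mono_on hint1 hint2 measurableSet_Ioi hb
  refine le_trans (le_of_eq ?_) hmono
  rw [MeasureTheory.integral_const_mul,
    integral_sub (intOn_shift 1 (3/2) one_pos (by norm_num))
      (intOn_shift 1 (5/2) one_pos (by norm_num)),
    int_shift 1 (3/2) one_pos (by norm_num), int_shift 1 (5/2) one_pos (by norm_num)]
  rw [Real.one_rpow, Real.one_rpow]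
  norm_num
  ring

lemma gap32_ub (m t : ℝ) (ht : 0 < t) (hm : 1 ≤ m) :
    2*t^(-(1/2:ℝ)) - Kf m (3/2) t ≤ 2*m + 2 := by
  have h := gap_eq m (3/2) t ht (by norm_num) (by linarith)
  rw [show (1:ℝ)-3/2 = -(1/2:ℝ) by norm_num, show (3/2:ℝ)-1 = 1/2 by norm_num] at h
  have h2 : t^(-(1/2:ℝ))/(1/2) = 2*t^(-(1/2:ℝ)) := by ring
  rw [h2] at h
  rw [h]
  set F : ℝ → ℝ := fun σ => (t+σ)^(-(3/2:ℝ)) * (1 - (1+σ)^(-m)) with hF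
  have hFint : IntegrableOn F (Ioi (0:ℝ)) := by
    apply IntegrableOn.congr_fun
      ((intOn_shift t (3/2) ht (by norm_num)).sub
        (intOn_ker m (3/2) t ht (by norm_num) (by linarith))) _ measurableSet_Ioi
    intro σ hσ; simp only [Pi.sub_apply]; ring
  have hsplit : Ioc (0:ℝ) 1 ∪ Ioi (1:ℝ) = Ioi (0:ℝ) := Ioc_union_Ioi_eq_Ioi zero_le_one
  have hdisj : Disjoint (Ioc (0:ℝ) 1) (Ioi (1:ℝ)) := Ioc_disjoint_Ioi le_rfl
  have hsum : (∫ σ in Ioi (0:ℝ), F σ)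
      = (∫ σ in Ioc (0:ℝ) 1, F σ) + ∫ σ in Ioi (1:ℝ), F σ := by
    rw [← hsplit]
    exact setIntegral_union hdisj measurableSet_Ioi
      (hFint.mono_set (by rw [← hsplit]; exact subset_union_left))
      (hFint.mono_set (by rw [← hsplit]; exact subset_union_right))
  rw [hsum]
  -- piece 1
  have hI1 : IntegrableOn (fun σ : ℝ => m * σ^(-(1/2:ℝ))) (Ioc (0:ℝ) 1) := by
    apply Integrable.const_mul
    have := intervalIntegral.intervalIntegrable_rpow' (a := (0:ℝ)) (b := 1)
      (r := -(1/2:ℝ)) (by norm_num)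
    rwa [intervalIntegrable_iff_integrableOn_Ioc_of_le zero_le_one] at this
  have hp1 : (∫ σ in Ioc (0:ℝ) 1, F σ) ≤ ∫ σ in Ioc (0:ℝ) 1, m * σ^(-(1/2:ℝ)) := by
    apply setIntegral_mono_on (hFint.mono_set (by rw [← hsplit]; exact subset_union_left))
      hI1 measurableSet_Ioc
    intro σ hσ
    have hσ0 : (0:ℝ) < σ := hσ.1
    have h3 : (t+σ)^(-(3/2:ℝ)) ≤ σ^(-(3/2:ℝ)) :=
      Real.rpow_le_rpow_of_nonpos hσ0 (by linarith) (by norm_num)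
    have h4 := bern m σ hm hσ0
    have h5 : σ * σ^(-(3/2:ℝ)) = σ^(-(1/2:ℝ)) := by
      rw [show (-(1/2:ℝ)) = (1:ℝ) + -(3/2:ℝ) by norm_num, Real.rpow_add hσ0, Real.rpow_one]
    have p1 : (0:ℝ) ≤ (t+σ)^(-(3/2:ℝ)) := Real.rpow_nonneg (by linarith) _
    have p3 : (0:ℝ) ≤ 1 - (1+σ)^(-m) := by
      have : (1+σ)^(-m) ≤ 1 :=
        Real.rpow_le_one_of_one_le_of_nonpos (by linarith) (by linarith)
      linarith
    have p4 : (0:ℝ) ≤ σ^(-(3/2:ℝ)) := Real.rpow_nonneg hσ0.le _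
    calc F σ ≤ σ^(-(3/2:ℝ)) * (1 - (1+σ)^(-m)) := mul_le_mul_of_nonneg_right h3 p3
      _ ≤ σ^(-(3/2:ℝ)) * (m*σ) := mul_le_mul_of_nonneg_left h4 p4
      _ = m * (σ * σ^(-(3/2:ℝ))) := by ring
      _ = m * σ^(-(1/2:ℝ)) := by rw [h5]
  have hv1 : (∫ σ in Ioc (0:ℝ) 1, m * σ^(-(1/2:ℝ))) = 2*m := by
    rw [MeasureTheory.integral_const_mul,
      ← intervalIntegral.integral_of_le zero_le_one,
      integral_rpow (Or.inl (by norm_num))]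
    rw [Real.zero_rpow (by norm_num)]
    norm_num
    ring
  -- piece 2
  have hI2 : IntegrableOn (fun σ : ℝ => σ^(-(3/2:ℝ))) (Ioi (1:ℝ)) :=
    integrableOn_Ioi_rpow_of_lt (by norm_num) one_pos
  have hp2 : (∫ σ in Ioi (1:ℝ), F σ) ≤ ∫ σ in Ioi (1:ℝ), σ^(-(3/2:ℝ)) := by
    apply setIntegral_mono_on (hFint.mono_set (by rw [← hsplit]; exact subset_union_right))
      hI2 measurableSet_Ioi
    intro σ hσ
    have hσ0 : (0:ℝ) < σ := lt_trans one_pos hσ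
    have h3 : (t+σ)^(-(3/2:ℝ)) ≤ σ^(-(3/2:ℝ)) :=
      Real.rpow_le_rpow_of_nonpos hσ0 (by linarith) (by norm_num)
    have p3 : 1 - (1+σ)^(-m) ≤ 1 := by
      have : (0:ℝ) ≤ (1+σ)^(-m) := Real.rpow_nonneg (by linarith) _
      linarith
    have p1 : (0:ℝ) ≤ (t+σ)^(-(3/2:ℝ)) := Real.rpow_nonneg (by linarith) _
    calc F σ ≤ (t+σ)^(-(3/2:ℝ)) * 1 := mul_le_mul_of_nonneg_left p3 p1
      _ = (t+σ)^(-(3/2:ℝ)) := by ring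
      _ ≤ σ^(-(3/2:ℝ)) := h3
  have hv2 : (∫ σ in Ioi (1:ℝ), σ^(-(3/2:ℝ))) = 2 := by
    rw [integral_Ioi_rpow_of_lt (by norm_num) one_pos]
    norm_num
  linarith

lemma K_one (m q : ℝ) (hq : 1 < q) (hm : 0 ≤ m) : Kf m q 1 = 1/(q+m-1) := by
  rw [Kf]
  have : ∀ σ ∈ Ioi (0:ℝ), (1+σ)^(-q) * (1+σ)^(-m) = (1+σ)^(-(q+m)) := by
    intro σ hσ
    have hσ0 : (0:ℝ) < σ := hσ
    rw [← Real.rpow_add (by linarith)]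
    ring_nf
  rw [setIntegral_congr_fun measurableSet_Ioi this, int_shift 1 (q+m) one_pos (by linarith),
    Real.one_rpow]

lemma K_big (m q t : ℝ) (ht : 1 ≤ t) (hq : 1 < q) (hm : 1 ≤ m) :
    Kf m q t ≤ t^((1/2:ℝ)-q) * (1/(m-1/2)) := by
  have ht0 : (0:ℝ) < t := by linarith
  have hb : ∀ σ ∈ Ioi (0:ℝ),
      (t+σ)^(-q) * (1+σ)^(-m) ≤ t^((1/2:ℝ)-q) * ((1+σ)^(-(m+1/2))) := by
    intro σ hσ
    have hσ0 : (0:ℝ) < σ := hσ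
    have h1σ : (0:ℝ) < 1+σ := by linarith
    have htσ : (0:ℝ) < t+σ := by linarith
    have e1 : (t+σ)^(-q) = (t+σ)^((1/2:ℝ)-q) * (t+σ)^(-(1/2:ℝ)) := by
      rw [← Real.rpow_add htσ]; ring_nf
    have e2 : (t+σ)^((1/2:ℝ)-q) ≤ t^((1/2:ℝ)-q) :=
      Real.rpow_le_rpow_of_nonpos ht0 (by linarith) (by linarith)
    have e3 : (t+σ)^(-(1/2:ℝ)) ≤ (1+σ)^(-(1/2:ℝ)) :=
      Real.rpow_le_rpow_of_nonpos h1σ (by linarith) (by norm_num)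
    have e4 : (1+σ)^(-(1/2:ℝ)) * (1+σ)^(-m) = (1+σ)^(-(m+1/2)) := by
      rw [← Real.rpow_add h1σ]; ring_nf
    have p1 : (0:ℝ) ≤ (1+σ)^(-m) := Real.rpow_nonneg h1σ.le _
    have p2 : (0:ℝ) ≤ (t+σ)^(-(1/2:ℝ)) := Real.rpow_nonneg htσ.le _
    have p3 : (0:ℝ) ≤ (1+σ)^(-(1/2:ℝ)) := Real.rpow_nonneg h1σ.le _
    have p4 : (0:ℝ) ≤ t^((1/2:ℝ)-q) := Real.rpow_nonneg ht0.le _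
    have p5 : (0:ℝ) ≤ (t+σ)^((1/2:ℝ)-q) := Real.rpow_nonneg htσ.le _
    calc (t+σ)^(-q) * (1+σ)^(-m)
        = (t+σ)^((1/2:ℝ)-q) * ((t+σ)^(-(1/2:ℝ)) * (1+σ)^(-m)) := by rw [e1]; ring
      _ ≤ t^((1/2:ℝ)-q) * ((t+σ)^(-(1/2:ℝ)) * (1+σ)^(-m)) := by
          apply mul_le_mul_of_nonneg_right e2 (by positivity)
      _ ≤ t^((1/2:ℝ)-q) * ((1+σ)^(-(1/2:ℝ)) * (1+σ)^(-m)) := by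
          apply mul_le_mul_of_nonneg_left (mul_le_mul_of_nonneg_right e3 p1) p4
      _ = t^((1/2:ℝ)-q) * ((1+σ)^(-(m+1/2))) := by rw [e4]
  have hint1 : IntegrableOn
      (fun σ : ℝ => t^((1/2:ℝ)-q) * ((1+σ)^(-(m+1/2)))) (Ioi (0:ℝ)) :=
    (intOn_shift 1 (m+1/2) one_pos (by linarith)).const_mul _
  have := setIntegral_mono_on (intOn_ker m q t ht0 hq (by linarith)) hint1 measurableSet_Ioi hb
  refine le_trans this (le_of_eq ?_)
  rw [MeasureTheory.integral_const_mul, int_shift 1 (m+1/2) one_pos (by linarith), Real.one_rpow]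
  congr 1
  rw [show m+1/2-1 = m-1/2 by ring]


set_option maxHeartbeats 1000000 in
lemma K_hasDeriv (m q t : ℝ) (ht : 0 < t) (hq : 1 < q) (hm : 0 ≤ m) :
    HasDerivAt (Kf m q) (-q * Kf m (q+1) t) t := by
  have ht2 : (0:ℝ) < t/2 := by linarith
  set F : ℝ → ℝ → ℝ := fun (x : ℝ) (σ : ℝ) => (x+σ)^(-q) * (1+σ)^(-m) with hFdef
  set F' : ℝ → ℝ → ℝ := fun (x : ℝ) (σ : ℝ) => (-q * (x+σ)^(-q-1)) * (1+σ)^(-m) with hF'def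
  set bound : ℝ → ℝ := fun σ : ℝ => (q * (t/2+σ)^(-q-1)) * (1+σ)^(-m) with hbdef
  have hmeas : ∀ᶠ x in 𝓝 t, AEStronglyMeasurable (F x) (volume.restrict (Ioi (0:ℝ))) := by
    filter_upwards [eventually_gt_nhds (show (0:ℝ) < t from ht)] with x hx
    exact ((contOn_ker m q x hx).aestronglyMeasurable measurableSet_Ioi)
  have hint : Integrable (F t) (volume.restrict (Ioi (0:ℝ))) := intOn_ker m q t ht hq hm
  have hmeas' : AEStronglyMeasurable (F' t) (volume.restrict (Ioi (0:ℝ))) := by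
    have hc : ContinuousOn (F' t) (Ioi (0:ℝ)) := by
      apply ContinuousOn.mul
      · apply ContinuousOn.mul continuousOn_const
        apply ContinuousOn.rpow_const (by fun_prop)
        intro x hx; exact Or.inl (by have : (0:ℝ) < x := hx; positivity)
      · apply ContinuousOn.rpow_const (by fun_prop)
        intro x hx; exact Or.inl (by have : (0:ℝ) < x := hx; positivity)
    exact hc.aestronglyMeasurable measurableSet_Ioi
  have hbound : ∀ᵐ σ ∂(volume.restrict (Ioi (0:ℝ))),
      ∀ x ∈ Metric.ball t (t/2), ‖F' x σ‖ ≤ bound σ := by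
    filter_upwards [ae_restrict_mem measurableSet_Ioi] with σ hσ
    intro x hx
    have hσ0 : (0:ℝ) < σ := hσ
    have hxt : t/2 < x := by
      have h := abs_lt.mp (by simpa [Real.dist_eq] using Metric.mem_ball.mp hx)
      linarith [h.1]
    have hxσ : (0:ℝ) < x + σ := by linarith
    have e1 : (x+σ)^(-q-1) ≤ (t/2+σ)^(-q-1) :=
      Real.rpow_le_rpow_of_nonpos (by linarith) (by linarith) (by linarith)
    have p1 : (0:ℝ) ≤ (1+σ)^(-m) := Real.rpow_nonneg (by linarith) _
    have p2 : (0:ℝ) ≤ (x+σ)^(-q-1) := Real.rpow_nonneg hxσ.le _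
    show ‖(-q * (x+σ)^(-q-1)) * (1+σ)^(-m)‖ ≤ (q * (t/2+σ)^(-q-1)) * (1+σ)^(-m)
    rw [norm_mul, Real.norm_of_nonneg p1, norm_mul,
      Real.norm_of_nonneg p2, norm_neg, Real.norm_of_nonneg (by linarith : (0:ℝ) ≤ q)]
    apply mul_le_mul_of_nonneg_right _ p1
    exact mul_le_mul_of_nonneg_left e1 (by linarith)
  have hbint : Integrable bound (volume.restrict (Ioi (0:ℝ))) := by
    apply IntegrableOn.congr_fun
      (((intOn_ker m (q+1) (t/2) ht2 (by linarith) hm).const_mul q :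
        IntegrableOn _ (Ioi (0:ℝ)) volume)) _ measurableSet_Ioi
    intro σ hσ
    simp only [hbdef]
    rw [show -(q+1) = -q-1 by ring]
    ring
  have hdiff : ∀ᵐ σ ∂(volume.restrict (Ioi (0:ℝ))),
      ∀ x ∈ Metric.ball t (t/2), HasDerivAt (fun y => F y σ) (F' x σ) x := by
    filter_upwards [ae_restrict_mem measurableSet_Ioi] with σ hσ
    intro x hx
    have hσ0 : (0:ℝ) < σ := hσ
    have hxt : t/2 < x := by
      have h := abs_lt.mp (by simpa [Real.dist_eq] using Metric.mem_ball.mp hx)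
      linarith [h.1]
    have hxσ : (0:ℝ) < x + σ := by linarith
    have h1 : HasDerivAt (fun y : ℝ => y + σ) 1 x := (hasDerivAt_id x).add_const σ
    have h2 : HasDerivAt (fun y : ℝ => (y+σ)^(-q))
        ((-q) * (x+σ)^(-q-1) * 1) x :=
      by have := (Real.hasDerivAt_rpow_const (x := x+σ) (p := -q) (Or.inl hxσ.ne')).comp x h1; exact this
    have h3 := h2.mul_const ((1+σ)^(-m))
    have : F' x σ = ((-q) * (x+σ)^(-q-1) * 1) * (1+σ)^(-m) := by
      simp only [hF'def]; ring
    rw [this]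
    exact h3
  have key := hasDerivAt_integral_of_dominated_loc_of_deriv_le (Metric.ball_mem_nhds t ht2) hmeas hint hmeas'
    hbound hbint hdiff
  obtain ⟨-, hd⟩ := key
  have he : (∫ σ in Ioi (0:ℝ), F' t σ) = -q * Kf m (q+1) t := by
    rw [Kf, ← MeasureTheory.integral_const_mul]
    congr 1; funext σ
    simp only [hF'def]
    rw [show -(q+1) = -q-1 by ring]
    ring
  rw [he] at hd
  exact hd

set_option maxHeartbeats 8000000 in
lemma main (n : ℕ) (hn : 3 ≤ n) :
    (∀ α : ℝ, 0 < α → α ≤ (n : ℝ) - 2 →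
      ∃ t : ℝ, 0 < t ∧ t < 1 ∧ Afun n t * α + Bfun n t = 0) ∧
    (∀ α : ℝ, -1 < α → α < 0 →
      ∃ t : ℝ, 1 < t ∧ Afun n t * α + Bfun n t = 0) ∧
    (∀ α : ℝ, -1 < α → α ≤ (n : ℝ) - 2 → ∀ t : ℝ, 0 < t →
      Afun n t * α + Bfun n t = 0 →
      0 < ((n : ℝ) - 2 + α) / Real.sqrt t - α * Hfun n t) := by
  have hn3 : (3:ℝ) ≤ (n:ℝ) := by exact_mod_cast hn
  set m : ℝ := ((n:ℝ)-1)/2 with hmdef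
  have hm : 1 ≤ m := by rw [hmdef]; linarith
  have hn0 : (0:ℝ) < n := by linarith
  have hH : Hfun n = Kf m (3/2) := rfl
  have hHd : ∀ t : ℝ, 0 < t → deriv (Hfun n) t = -(3/2) * Kf m (5/2) t := by
    intro t ht
    have h := K_hasDeriv m (3/2) t ht (by norm_num) (by linarith)
    rw [show (3/2:ℝ)+1 = 5/2 by norm_num] at h
    rw [hH]
    exact h.deriv
  -- the auxiliary continuous expression
  set G : ℝ → ℝ → ℝ := fun α t =>
    α*(((n:ℝ)-1)*Real.sqrt t*Kf m (3/2) t - (3/2)*(n:ℝ)*(t*Real.sqrt t)*Kf m (5/2) t + 1)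
      + (-((n:ℝ)*((n:ℝ)-2)/2)*Real.sqrt t*Kf m (3/2) t + ((n:ℝ)-2)) with hGdef
  have hfG : ∀ α t : ℝ, 0 < t → Afun n t * α + Bfun n t = G α t := by
    intro α t ht
    have e3 : t^((3:ℝ)/2) = t * Real.sqrt t := by
      rw [Real.sqrt_eq_rpow, show (3:ℝ)/2 = 1 + 1/2 by norm_num, Real.rpow_add ht,
        Real.rpow_one]
    rw [Afun, Bfun, hHd t ht, hH, hGdef, e3]
    ring
  have hGcont : ∀ α : ℝ, ∀ t : ℝ, 0 < t → ContinuousAt (G α) t := by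
    intro α t ht
    have c3 : ContinuousAt (Kf m (3/2)) t :=
      (K_hasDeriv m (3/2) t ht (by norm_num) (by linarith)).continuousAt
    have c5 : ContinuousAt (Kf m (5/2)) t :=
      (K_hasDeriv m (5/2) t ht (by norm_num) (by linarith)).continuousAt
    have cs : ContinuousAt Real.sqrt t := Real.continuous_sqrt.continuousAt
    rw [hGdef]
    fun_prop
  have hIcc_cont : ∀ α a b : ℝ, 0 < a →
      ContinuousOn (fun t => Afun n t * α + Bfun n t) (Icc a b) := by
    intro α a b ha
    have hsub : Icc a b ⊆ Ioi (0:ℝ) := fun x hx => lt_of_lt_of_le ha hx.1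
    have : ContinuousOn (G α) (Icc a b) := fun x hx =>
      ((hGcont α x (hsub hx)).continuousWithinAt)
    exact this.congr (fun x hx => hfG α x (hsub hx))
  -- values at 1
  have hK3one : Kf m (3/2) 1 = 2/(n:ℝ) := by
    rw [K_one m (3/2) (by norm_num) (by linarith),
      show (3:ℝ)/2 + m - 1 = (n:ℝ)/2 by rw [hmdef]; ring, one_div_div]
  have hK5one : Kf m (5/2) 1 = 2/((n:ℝ)+2) := by
    rw [K_one m (5/2) (by norm_num) (by linarith),
      show (5:ℝ)/2 + m - 1 = ((n:ℝ)+2)/2 by rw [hmdef]; ring, one_div_div]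
  have hf1 : ∀ α : ℝ, Afun n 1 * α + Bfun n 1 = α * (4*((n:ℝ)-1)/((n:ℝ)*((n:ℝ)+2))) := by
    intro α
    rw [hfG α 1 one_pos, hGdef]
    simp only [Real.sqrt_one, hK3one, hK5one]
    have h2 : (n:ℝ) + 2 ≠ 0 := by linarith
    have h0 : (n:ℝ) ≠ 0 := by linarith
    field_simp
    ring
  refine ⟨?_, ?_, ?_⟩
  · -- Part (i)
    intro α hα0 hα1
    obtain ⟨r₀, hr₀def⟩ : ∃ x : ℝ, x = ((n:ℝ)-2)/(3*(n:ℝ)*((n:ℝ)-1)) := ⟨_, rfl⟩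
    have hr₀pos : 0 < r₀ := by
      rw [hr₀def]; apply div_pos (by linarith) (by nlinarith)
    have hr₀ne : r₀ ≠ 0 := hr₀pos.ne'
    have hr₀val : r₀ * (3*(n:ℝ)*((n:ℝ)-1)) = (n:ℝ)-2 := by
      rw [hr₀def]; exact div_mul_cancel₀ _ (by nlinarith)
    have hr₀small : r₀ * ((n:ℝ)+1) ≤ 1 := by
      rw [hr₀def, div_mul_eq_mul_div, div_le_one (by nlinarith)]
      nlinarith
    have hr₀lt1 : r₀ < 1 := by nlinarith
    obtain ⟨t₀, ht₀def⟩ : ∃ x : ℝ, x = r₀^2 := ⟨_, rfl⟩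
    have ht₀pos : 0 < t₀ := by rw [ht₀def]; positivity
    have ht₀lt1 : t₀ < 1 := by rw [ht₀def]; nlinarith
    have hsqrt : Real.sqrt t₀ = r₀ := by rw [ht₀def, Real.sqrt_sq hr₀pos.le]
    have e1 : t₀^(-(1/2:ℝ)) = r₀⁻¹ := by
      rw [ht₀def, ← Real.rpow_natCast r₀ 2, ← Real.rpow_mul hr₀pos.le]
      norm_num
      exact Real.rpow_neg_one r₀
    have e2 : t₀^(-(3/2:ℝ)) = (r₀^3)⁻¹ := by
      rw [ht₀def, ← Real.rpow_natCast r₀ 2, ← Real.rpow_mul hr₀pos.le]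
      rw [show ((2:ℕ):ℝ) * -(3/2:ℝ) = -((3:ℕ):ℝ) by norm_num]
      rw [Real.rpow_neg hr₀pos.le, Real.rpow_natCast]
    obtain ⟨K3, hK3⟩ : ∃ x : ℝ, x = Kf m (3/2) t₀ := ⟨_, rfl⟩
    obtain ⟨K5, hK5⟩ : ∃ x : ℝ, x = Kf m (5/2) t₀ := ⟨_, rfl⟩
    obtain ⟨u, hudef⟩ : ∃ x : ℝ, x = r₀ * K3 := ⟨_, rfl⟩
    obtain ⟨v, hvdef⟩ : ∃ x : ℝ, x = t₀ * r₀ * K5 := ⟨_, rfl⟩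
    have hmax : max t₀ 1 = 1 := max_eq_right ht₀lt1.le
    have hu1 : u ≤ 2 - (4/3)*r₀ := by
      have h := gap32_lb m t₀ ht₀pos hm
      rw [hmax, Real.one_rpow, e1, ← hK3] at h
      have h2 : K3 ≤ 2*r₀⁻¹ - 4/3 := by linarith
      have h3 := mul_le_mul_of_nonneg_left h2 hr₀pos.le
      have e : r₀ * (2*r₀⁻¹ - 4/3) = 2 - (4/3)*r₀ := by field_simp
      rw [e] at h3
      rw [hudef]; exact h3
    have hu2 : 2 - u ≤ ((n:ℝ)+1)*r₀ := by
      have h := gap32_ub m t₀ ht₀pos hm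
      rw [e1, ← hK3] at h
      have h3 := mul_le_mul_of_nonneg_left h hr₀pos.le
      have e : r₀ * (2*r₀⁻¹ - K3) = 2 - u := by rw [hudef]; field_simp
      have e' : r₀ * (2*m+2) = ((n:ℝ)+1)*r₀ := by rw [hmdef]; ring
      rw [e, e'] at h3
      exact h3
    have hu0 : 0 ≤ u := by
      have := K_nonneg m (3/2) t₀ ht₀pos
      rw [hudef, hK3]; positivity
    have hv0 : 0 ≤ v := by
      have := K_nonneg m (5/2) t₀ ht₀pos
      rw [hvdef, hK5]; positivity
    have hv1 : v ≤ 2/3 := by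
      have h := K_le m (5/2) t₀ ht₀pos (by norm_num) (by linarith)
      rw [show (1:ℝ)-5/2 = -(3/2:ℝ) by norm_num, e2, ← hK5] at h
      have h3 := mul_le_mul_of_nonneg_left h (by positivity : (0:ℝ) ≤ t₀ * r₀)
      have e : t₀ * r₀ * ((r₀^3)⁻¹/(5/2-1)) = 2/3 := by
        rw [ht₀def]; field_simp; ring
      rw [e] at h3
      rw [hvdef]; exact h3
    have hv2 : 2/3 - v ≤ 2*m*t₀ := by
      have h := gap52_ub m t₀ ht₀pos hm
      rw [e1, e2, ← hK5] at h
      have h3 := mul_le_mul_of_nonneg_left h (by positivity : (0:ℝ) ≤ t₀ * r₀)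
      have e : t₀ * r₀ * ((2/3)*(r₀^3)⁻¹ - K5) = 2/3 - v := by
        rw [hvdef, ht₀def]; field_simp
      have e' : t₀ * r₀ * ((4*m/3)*r₀⁻¹) = (4*m/3)*t₀ := by
        rw [ht₀def]; field_simp
      rw [e, e'] at h3
      nlinarith [ht₀pos, hm]
    -- sign at t₀
    have hGt₀ : Afun n t₀ * α + Bfun n t₀
        = α*(((n:ℝ)-1)*u - (3/2)*(n:ℝ)*v + 1) + (-((n:ℝ)*((n:ℝ)-2)/2)*u + ((n:ℝ)-2)) := by
      rw [hfG α t₀ ht₀pos]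
      simp only [hGdef]
      rw [hsqrt, ← hK3, ← hK5, hudef, hvdef]
      ring
    have hP : 0 ≤ ((n:ℝ)-1)*u - (3/2)*(n:ℝ)*v + 1 := by
      have h1 : ((n:ℝ)-1)*u ≥ ((n:ℝ)-1)*(2 - ((n:ℝ)+1)*r₀) := by
        apply mul_le_mul_of_nonneg_left (by linarith) (by linarith)
      have h2 : (3/2)*(n:ℝ)*v ≤ (3/2)*(n:ℝ)*(2/3) := by
        apply mul_le_mul_of_nonneg_left hv1 (by linarith)
      have h3 : ((n:ℝ)-1)*(r₀*((n:ℝ)+1)) ≤ ((n:ℝ)-1)*1 :=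
        mul_le_mul_of_nonneg_left hr₀small (by linarith)
      nlinarith [h1, h2, h3]
    have hinner : ((n:ℝ)/2-1)*u - (3/2)*(n:ℝ)*v + 2 < 0 := by
      have h1 : ((n:ℝ)/2-1)*u ≤ ((n:ℝ)/2-1)*(2 - (4/3)*r₀) := by
        apply mul_le_mul_of_nonneg_left hu1 (by linarith)
      have hv2' : 2/3 - v ≤ ((n:ℝ)-1)*t₀ := by
        have e : 2*m*t₀ = ((n:ℝ)-1)*t₀ := by rw [hmdef]; ring
        linarith [hv2, e.le, e.ge]
      have h2 : (3/2)*(n:ℝ)*v ≥ (3/2)*(n:ℝ)*(2/3 - ((n:ℝ)-1)*t₀) := by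
        apply mul_le_mul_of_nonneg_left (by linarith) (by linarith)
      -- (n/2-1)(2-(4/3)r₀) - (3/2)n(2/3 - (n-1)t₀) + 2 = -(2(n-2)/3) r₀ + (3/2) n (n-1) t₀
      have h4 : (3:ℝ)/2*(n:ℝ)*((n:ℝ)-1)*t₀ < (2*((n:ℝ)-2)/3)*r₀ := by
        have : (3:ℝ)/2*(n:ℝ)*((n:ℝ)-1)*t₀ = (1/2)*((n:ℝ)-2)*r₀ := by
          rw [ht₀def]; nlinarith [hr₀val]
        rw [this]
        nlinarith [hr₀pos]
      nlinarith [h1, h2, h4]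
    have hft₀ : Afun n t₀ * α + Bfun n t₀ < 0 := by
      rw [hGt₀]
      have s1 : α*(((n:ℝ)-1)*u - (3/2)*(n:ℝ)*v + 1)
          ≤ ((n:ℝ)-2)*(((n:ℝ)-1)*u - (3/2)*(n:ℝ)*v + 1) :=
        mul_le_mul_of_nonneg_right hα1 hP
      have s2 := mul_lt_mul_of_pos_left hinner (show (0:ℝ) < (n:ℝ)-2 by linarith)
      have s3 : ((n:ℝ)-2) * 0 = 0 := by ring
      nlinarith [s1, s2]
    have hf1pos : 0 < Afun n 1 * α + Bfun n 1 := by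
      rw [hf1 α]
      have : (0:ℝ) < 4*((n:ℝ)-1)/((n:ℝ)*((n:ℝ)+2)) := by
        apply div_pos (by linarith) (by nlinarith)
      positivity
    have hIVT := intermediate_value_Ioo ht₀lt1.le (hIcc_cont α t₀ 1 ht₀pos)
    have h0mem : (0:ℝ) ∈ Ioo (Afun n t₀ * α + Bfun n t₀) (Afun n 1 * α + Bfun n 1) :=
      ⟨hft₀, hf1pos⟩
    obtain ⟨t, htmem, htval⟩ := hIVT h0mem
    exact ⟨t, lt_trans ht₀pos htmem.1, htmem.2, htval⟩
  · -- Part (ii)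
    intro α hα0 hα1
    have hc : 0 < (n:ℝ) - 2 + α := by linarith
    obtain ⟨R, hRdef⟩ : ∃ x : ℝ, x = (n:ℝ)^2/((n:ℝ)-2+α) + 1 := ⟨_, rfl⟩
    have hR1 : 1 < R := by
      rw [hRdef]
      have : (0:ℝ) < (n:ℝ)^2/((n:ℝ)-2+α) := by positivity
      linarith
    have hR0 : 0 < R := by linarith
    have hcR : ((n:ℝ)-2+α)*R = (n:ℝ)^2 + ((n:ℝ)-2+α) := by
      rw [hRdef]; field_simp
    obtain ⟨T, hTdef⟩ : ∃ x : ℝ, x = R^2 := ⟨_, rfl⟩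
    have hT1 : 1 < T := by rw [hTdef]; nlinarith
    have hT0 : 0 < T := by linarith
    have hsqrt : Real.sqrt T = R := by rw [hTdef, Real.sqrt_sq hR0.le]
    have eT1 : T^(-(1:ℝ)) = T⁻¹ := Real.rpow_neg_one T
    have eT2 : T^(-(2:ℝ)) = (T^2)⁻¹ := by
      rw [show (-(2:ℝ)) = -((2:ℕ):ℝ) by norm_num, Real.rpow_neg hT0.le, Real.rpow_natCast]
    obtain ⟨K3, hK3⟩ : ∃ x : ℝ, x = Kf m (3/2) T := ⟨_, rfl⟩
    obtain ⟨K5, hK5⟩ : ∃ x : ℝ, x = Kf m (5/2) T := ⟨_, rfl⟩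
    obtain ⟨u, hudef⟩ : ∃ x : ℝ, x = R * K3 := ⟨_, rfl⟩
    obtain ⟨v, hvdef⟩ : ∃ x : ℝ, x = T * R * K5 := ⟨_, rfl⟩
    have hu0 : 0 ≤ u := by
      have := K_nonneg m (3/2) T hT0
      rw [hudef, hK3]; positivity
    have hv0 : 0 ≤ v := by
      have := K_nonneg m (5/2) T hT0
      rw [hvdef, hK5]; positivity
    have hmhalf : 1/(m - 1/2) ≤ 2 := by
      rw [div_le_iff₀ (by linarith)]
      linarith
    have hK3nonneg : 0 ≤ K3 := by rw [hK3]; exact K_nonneg m (3/2) T hT0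
    have hK5nonneg : 0 ≤ K5 := by rw [hK5]; exact K_nonneg m (5/2) T hT0
    have hu2 : u ≤ 2/R := by
      have h := K_big m (3/2) T hT1.le (by norm_num) hm
      rw [show (1/2:ℝ)-3/2 = -(1:ℝ) by norm_num, eT1, ← hK3] at h
      have h2 : K3 ≤ T⁻¹ * 2 := by
        calc K3 ≤ T⁻¹ * (1/(m-1/2)) := h
          _ ≤ T⁻¹ * 2 := by
              apply mul_le_mul_of_nonneg_left hmhalf (by positivity)
      have h3 := mul_le_mul_of_nonneg_left h2 hR0.le
      have e : R * (T⁻¹ * 2) = 2/R := by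
        rw [hTdef]; field_simp
      rw [e] at h3
      rw [hudef]; exact h3
    have hv2 : v ≤ 2/R := by
      have h := K_big m (5/2) T hT1.le (by norm_num) hm
      rw [show (1/2:ℝ)-5/2 = -(2:ℝ) by norm_num, eT2, ← hK5] at h
      have h2 : K5 ≤ (T^2)⁻¹ * 2 := by
        calc K5 ≤ (T^2)⁻¹ * (1/(m-1/2)) := h
          _ ≤ (T^2)⁻¹ * 2 := by
              apply mul_le_mul_of_nonneg_left hmhalf (by positivity)
      have h3 := mul_le_mul_of_nonneg_left h2 (by positivity : (0:ℝ) ≤ T * R)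
      have e : T * R * ((T^2)⁻¹ * 2) = 2*R/T := by
        field_simp
      rw [e] at h3
      have e2 : 2*R/T = 2/R := by
        rw [hTdef]; field_simp
      rw [e2] at h3
      rw [hvdef]; exact h3
    have hGT : Afun n T * α + Bfun n T
        = α*(((n:ℝ)-1)*u - (3/2)*(n:ℝ)*v + 1) + (-((n:ℝ)*((n:ℝ)-2)/2)*u + ((n:ℝ)-2)) := by
      rw [hfG α T hT0]
      simp only [hGdef]
      rw [hsqrt, ← hK3, ← hK5, hudef, hvdef]
      ring
    have hfT : 0 < Afun n T * α + Bfun n T := by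
      rw [hGT]
      have j1 : -(((n:ℝ)-1)*u) ≤ α*(((n:ℝ)-1)*u) := by
        have h := mul_le_mul_of_nonneg_right hα0.le (by nlinarith : (0:ℝ) ≤ ((n:ℝ)-1)*u)
        linarith [h]
      have j2 : 0 ≤ α*(-((3/2)*(n:ℝ)*v)) := by
        have h := mul_nonneg (neg_nonneg.mpr hα1.le) (by nlinarith : (0:ℝ) ≤ (3/2)*(n:ℝ)*v)
        nlinarith [h]

      have j3 : ((n:ℝ)-1)*u ≤ ((n:ℝ)-1)*(2/R) :=
        mul_le_mul_of_nonneg_left hu2 (by linarith)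
      have j4 : ((n:ℝ)*((n:ℝ)-2)/2)*u ≤ ((n:ℝ)*((n:ℝ)-2)/2)*(2/R) :=
        mul_le_mul_of_nonneg_left hu2 (by nlinarith)
      -- f ≥ (n-2+α) - (2(n-1) + n(n-2))/R > 0
      have key : ((n:ℝ)-1)*(2/R) + ((n:ℝ)*((n:ℝ)-2)/2)*(2/R) < (n:ℝ)-2+α := by
        have e : ((n:ℝ)-1)*(2/R) + ((n:ℝ)*((n:ℝ)-2)/2)*(2/R) = ((n:ℝ)^2-2)/R := by
          field_simp; ring
        rw [e, div_lt_iff₀ hR0]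
        linarith [hcR, hc]
      linarith [j1, j2, j3, j4, key]
    have hf1neg : Afun n 1 * α + Bfun n 1 < 0 := by
      rw [hf1 α]
      have hpos : (0:ℝ) < 4*((n:ℝ)-1)/((n:ℝ)*((n:ℝ)+2)) := by
        apply div_pos (by linarith) (by nlinarith)
      exact mul_neg_of_neg_of_pos hα1 hpos
    have hIVT := intermediate_value_Ioo hT1.le (hIcc_cont α 1 T one_pos)
    obtain ⟨t, htmem, htval⟩ := hIVT ⟨hf1neg, hfT⟩
    exact ⟨t, htmem.1, htval⟩
  · -- Part (iii)
    intro α hα0 hα1 t ht _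
    obtain ⟨r, hrdef⟩ : ∃ x : ℝ, x = Real.sqrt t := ⟨_, rfl⟩
    have hr0 : 0 < r := by rw [hrdef]; exact Real.sqrt_pos.mpr ht
    have hr2 : r^2 = t := by rw [hrdef, Real.sq_sqrt ht.le]
    have ert : t^(-(1/2:ℝ)) = r⁻¹ := by
      rw [← hr2, ← Real.rpow_natCast r 2, ← Real.rpow_mul hr0.le]
      norm_num
      exact Real.rpow_neg_one r
    obtain ⟨K3, hK3⟩ : ∃ x : ℝ, x = Kf m (3/2) t := ⟨_, rfl⟩
    obtain ⟨u, hudef⟩ : ∃ x : ℝ, x = r * K3 := ⟨_, rfl⟩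
    have hs0 : (0:ℝ) < max t 1 := lt_of_lt_of_le one_pos (le_max_right _ _)
    have hu2 : u < 2 := by
      have h := gap32_lb m t ht hm
      rw [ert, ← hK3] at h
      have hgap : 0 < (4/3) * (max t 1)^(-(3/2:ℝ)) := by
        have := Real.rpow_pos_of_pos hs0 (-(3/2:ℝ))
        positivity
      have h2 : K3 < 2*r⁻¹ := by linarith
      have h3 := mul_lt_mul_of_pos_left h2 hr0
      have e : r * (2*r⁻¹) = 2 := by field_simp
      rw [e] at h3
      rw [hudef]; exact h3
    have hu1 : 0 < u := by
      have h := K_pos_lb m (3/2) t ht (by norm_num) (by linarith)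
      have hpos : 0 < (max t 1)^(-(3/2:ℝ)) * (1/(3/2+m-1)) := by
        have h1 := Real.rpow_pos_of_pos hs0 (-(3/2:ℝ))
        have h2 : (0:ℝ) < 3/2+m-1 := by linarith
        positivity
      have hK3pos : 0 < K3 := by rw [hK3]; linarith
      rw [hudef]; positivity
    rw [hH, ← hK3, ← hrdef]
    have hnum : 0 < ((n:ℝ)-2+α) - α*u := by
      rcases le_or_gt α 0 with hneg | hpos
      · have : α*u ≤ 0 := mul_nonpos_of_nonpos_of_nonneg hneg hu1.le
        linarith
      · have : α*u < α*2 := by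
          apply mul_lt_mul_of_pos_left hu2 hpos
        linarith
    have heq : ((n:ℝ)-2+α)/r - α*K3 = (((n:ℝ)-2+α) - α*u)/r := by
      rw [hudef]; field_simp
    rw [heq]
    positivity

end S14


/-- (i) for `α ∈ (0, n-2]` the equation `A(t)α + B(t) = 0` has a solution
`t ∈ (0,1)`; (ii) for `α ∈ (-1,0)` it has a solution `t > 1`; (iii) for `α ∈ (-1, n-2]`,
any solution `t > 0` satisfies `(n-2+α)/√t - α H(t) > 0`. -/
theorem statement14 (n : ℕ) (hn : 3 ≤ n) :
    (∀ α : ℝ, 0 < α → α ≤ (n : ℝ) - 2 →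
      ∃ t : ℝ, 0 < t ∧ t < 1 ∧ Afun n t * α + Bfun n t = 0) ∧
    (∀ α : ℝ, -1 < α → α < 0 →
      ∃ t : ℝ, 1 < t ∧ Afun n t * α + Bfun n t = 0) ∧
    (∀ α : ℝ, -1 < α → α ≤ (n : ℝ) - 2 → ∀ t : ℝ, 0 < t →
      Afun n t * α + Bfun n t = 0 →
      0 < ((n : ℝ) - 2 + α) / Real.sqrt t - α * Hfun n t) :=
  S14.main n hn

end S14infra
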